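/- Fix α > 0, ε > 0, Δ > 0, and w_0 ∈ ℝ, and assume the deterministic sign dynamics u_{n+1} = u_n − α·sign(u_n) started at u_0 = w_0 satisfies |u_n| ≥ ε + Δ for all n ≥ 0 (the step grid misses the target interval with margin Δ). For each σ ≥ 0 let (w_n^{(σ)}) be the noisy sign dynamics started at w_0 driven by the same i.i.d. standard Gaussian sequence (ξ_n), and let T_ε^{(σ)} = inf{n ≥ 0 : |w_n^{(σ)}| ≤ ε}. Then for every positive integer N: lim_{σ→0} P(T_ε^{(σ)} > N) = 1 and lim_{σ→∞} P(T_ε^{(σ)} > N) = 1. -/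

import Mathlib

/-!
For small `σ` the noisy orbit shadows the deterministic one: as long as the accumulated noise
`α σ ∑ |ξ k|` stays below `Δ`, both orbits see the same signs, so they differ exactly by that
accumulated noise and the noisy orbit stays outside `[-ε, ε]`; this event has probability tending
to `1` as `σ → 0`. For large `σ`, each iterate `w (n + 1)` is a function of the past minus an
independent Gaussian kick of size `α σ`, so the bounded Gaussian density gives
`P(|w (n + 1)| ≤ ε) = O(ε / (α σ))`, and a union bound over the `N` steps finishes.
-/

open MeasureTheory ProbabilityTheory Filter

noncomputable def sgn (x : ℝ) : ℝ := if 0 < x then 1 else if x < 0 then -1 else 0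

open Real Topology Finset
open scoped ENNReal NNReal

lemma sgn_of_pos {x : ℝ} (h : 0 < x) : sgn x = 1 := if_pos h

lemma sgn_of_neg {x : ℝ} (h : x < 0) : sgn x = -1 := by
  rw [sgn, if_neg h.not_gt, if_pos h]

lemma measurable_sgn : Measurable sgn :=
  Measurable.ite measurableSet_Ioi measurable_const
    (Measurable.ite measurableSet_Iio measurable_const measurable_const)

lemma sgn_eq_of_abs_sub_lt {a b δ : ℝ} (ha : δ ≤ |a|) (hab : |b - a| < δ) : sgn b = sgn a := by
  obtain ⟨hlo, hhi⟩ := abs_lt.mp hab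
  rcases lt_trichotomy a 0 with h | h | h
  · rw [abs_of_neg h] at ha
    rw [sgn_of_neg h, sgn_of_neg (by linarith)]
  · rw [h, abs_zero] at ha
    linarith [abs_nonneg (b - a)]
  · rw [abs_of_pos h] at ha
    rw [sgn_of_pos h, sgn_of_pos (by linarith)]

lemma gaussianPDFReal_le (m : ℝ) (v : ℝ≥0) (x : ℝ) : gaussianPDFReal m v x ≤ (√(2 * π * v))⁻¹ :=
  mul_le_of_le_one_right (by positivity) <| exp_le_one_iff.mpr <|
    div_nonpos_of_nonpos_of_nonneg (neg_nonpos.mpr (sq_nonneg _)) (by positivity)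

lemma gaussianReal_Icc_le (m : ℝ) {v : ℝ≥0} (hv : v ≠ 0) (l r : ℝ) :
    gaussianReal m v (Set.Icc l r) ≤ ENNReal.ofReal ((√(2 * π * v))⁻¹ * (r - l)) :=
  calc gaussianReal m v (Set.Icc l r)
      ≤ ∫⁻ _ in Set.Icc l r, ENNReal.ofReal (√(2 * π * v))⁻¹ := by
        rw [gaussianReal_apply m hv]
        exact lintegral_mono fun x ↦ ENNReal.ofReal_le_ofReal (gaussianPDFReal_le m v x)
    _ = ENNReal.ofReal ((√(2 * π * v))⁻¹ * (r - l)) := by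
        rw [setLIntegral_const, Real.volume_Icc, ← ENNReal.ofReal_mul (by positivity)]

lemma measure_abs_sub_mul_le_of_indepFun {Ω : Type*} [MeasurableSpace Ω] {P : Measure Ω}
    [IsProbabilityMeasure P] {B X : Ω → ℝ} (hB : Measurable B) (hX : Measurable X)
    {m : ℝ} {v : ℝ≥0} (hv : v ≠ 0) (hXlaw : P.map X = gaussianReal m v) (hBX : IndepFun B X P)
    {c : ℝ} (hc : 0 < c) (ε : ℝ) :
    P {ω | |B ω - c * X ω| ≤ ε} ≤ ENNReal.ofReal ((√(2 * π * v))⁻¹ * (2 * ε / c)) := by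
  set s : Set (ℝ × ℝ) := {p | |p.1 - c * p.2| ≤ ε}
  have hs : MeasurableSet s :=
    measurableSet_le (measurable_fst.sub (measurable_snd.const_mul c)).abs measurable_const
  have hsection (b : ℝ) : Prod.mk b ⁻¹' s = Set.Icc ((b - ε) / c) ((b + ε) / c) := by
    ext x
    simp only [s, Set.mem_preimage, Set.mem_ofPred_eq, Set.mem_Icc, abs_le, div_le_iff₀ hc,
      le_div_iff₀ hc]
    constructor <;> rintro ⟨h₁, h₂⟩ <;> constructor <;> linarith
  have hlaw : P.map (fun ω ↦ (B ω, X ω)) = (P.map B).prod (gaussianReal m v) := by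
    rw [← hXlaw]
    exact (indepFun_iff_map_prod_eq_prod_map_map hB.aemeasurable hX.aemeasurable).mp hBX
  have := Measure.isProbabilityMeasure_map (μ := P) hB.aemeasurable
  calc P {ω | |B ω - c * X ω| ≤ ε} = P.map (fun ω ↦ (B ω, X ω)) s :=
        (Measure.map_apply (hB.prodMk hX) hs).symm
    _ = ∫⁻ b, gaussianReal m v (Set.Icc ((b - ε) / c) ((b + ε) / c)) ∂P.map B := by
        simp only [hlaw, Measure.prod_apply hs, hsection]
    _ ≤ ∫⁻ _, ENNReal.ofReal ((√(2 * π * v))⁻¹ * (2 * ε / c)) ∂P.map B := by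
        refine lintegral_mono fun b ↦ (gaussianReal_Icc_le m hv _ _).trans_eq ?_
        congr 2
        ring
    _ = ENNReal.ofReal ((√(2 * π * v))⁻¹ * (2 * ε / c)) := by simp

lemma tendsto_measure_setOf_lt_atTop {Ω : Type*} [MeasurableSpace Ω] (μ : Measure Ω)
    (f : Ω → ℝ) : Tendsto (fun x ↦ μ {ω | f ω < x}) atTop (𝓝 (μ Set.univ)) := by
  have hunion : ⋃ x : ℝ, {ω | f ω < x} = Set.univ :=
    Set.eq_univ_of_forall fun ω ↦ Set.mem_iUnion.mpr (exists_gt (f ω))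
  rw [← hunion]
  exact tendsto_measure_iUnion_atTop fun _ _ hxy _ hω ↦ lt_of_lt_of_le hω hxy

lemma tendsto_measure_of_measure_compl_le {Ω ι : Type*} [MeasurableSpace Ω] {μ : Measure Ω}
    [IsProbabilityMeasure μ] {l : Filter ι} {s : ι → Set Ω} {b : ι → ℝ≥0∞}
    (hb : Tendsto b l (𝓝 0)) (hsb : ∀ᶠ i in l, μ (s i)ᶜ ≤ b i) :
    Tendsto (fun i ↦ μ (s i)) l (𝓝 1) := by
  have hlower : Tendsto (fun i ↦ 1 - b i) l (𝓝 1) := by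
    simpa using ENNReal.Tendsto.sub tendsto_const_nhds hb (Or.inl ENNReal.one_ne_top)
  refine tendsto_of_tendsto_of_tendsto_of_le_of_le' hlower tendsto_const_nhds ?_
    (Eventually.of_forall fun _ ↦ prob_le_one)
  filter_upwards [hsb] with i hi
  have := measure_univ_le_add_compl (μ := μ) (s i)
  rw [measure_univ] at this
  exact tsub_le_iff_right.mpr (this.trans (add_le_add_right hi _))

section Shadowing

variable {α Δ : ℝ} {u v e : ℕ → ℝ} {N : ℕ}

lemma abs_sub_lt_of_sum_lt (hu : ∀ n, u (n + 1) = u n - α * sgn (u n))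
    (hv : ∀ n, v (n + 1) = v n - α * (sgn (v n) + e n)) (h0 : v 0 = u 0)
    (hmargin : ∀ n, Δ ≤ |u n|) (hsmall : ∑ k ∈ range N, |α * e k| < Δ) :
    ∀ n ≤ N, |v n - u n| < Δ := by
  have hpartial {n : ℕ} (hn : n ≤ N) : ∑ k ∈ range n, |α * e k| < Δ :=
    (sum_le_sum_of_subset_of_nonneg (range_subset_range.mpr hn) fun _ _ _ ↦ abs_nonneg _).trans_lt
      hsmall
  suffices h : ∀ n ≤ N, |v n - u n| ≤ ∑ k ∈ range n, |α * e k| from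
    fun n hn ↦ (h n hn).trans_lt (hpartial hn)
  intro n
  induction n with
  | zero => simp [h0]
  | succ n ih =>
    intro hn
    have hclose := ih (by omega)
    have hsgn : sgn (v n) = sgn (u n) :=
      sgn_eq_of_abs_sub_lt (hmargin n) (hclose.trans_lt (hpartial (by omega)))
    calc |v (n + 1) - u (n + 1)| = |(v n - u n) - α * e n| := by
          rw [hu, hv, hsgn]; ring_nf
      _ ≤ |v n - u n| + |α * e n| := abs_sub _ _
      _ ≤ ∑ k ∈ range (n + 1), |α * e k| := by
          rw [sum_range_succ]; exact add_le_add_left hclose _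

lemma lt_abs_of_sum_lt {ε : ℝ} (hε : 0 ≤ ε) (hu : ∀ n, u (n + 1) = u n - α * sgn (u n))
    (hv : ∀ n, v (n + 1) = v n - α * (sgn (v n) + e n)) (h0 : v 0 = u 0)
    (hmargin : ∀ n, ε + Δ ≤ |u n|) (hsmall : ∑ k ∈ range N, |α * e k| < Δ) :
    ∀ n ≤ N, ε < |v n| := by
  intro n hn
  have hclose := abs_sub_lt_of_sum_lt hu hv h0
    (fun k ↦ (le_add_of_nonneg_left hε).trans (hmargin k)) hsmall n hn
  linarith [abs_sub_abs_le_abs_sub (u n) (v n), abs_sub_comm (u n) (v n), hmargin n]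

end Shadowing

section NoisySignDynamics

variable {Ω : Type*} {mΩ : MeasurableSpace Ω} {ξ : ℕ → Ω → ℝ} {y : ℕ → Ω → ℝ} {α σ w0 : ℝ}

lemma measurable_natural_of_sign_dynamics (hξ : ∀ n, StronglyMeasurable (ξ n))
    (hy0 : ∀ ω, y 0 ω = w0)
    (hy : ∀ n ω, y (n + 1) ω = y n ω - α * (sgn (y n ω) + σ * ξ (n + 1) ω)) (n : ℕ) :
    Measurable[Filtration.natural ξ hξ n] (y n) := by
  induction n with
  | zero =>
    rw [funext hy0]
    exact measurable_const
  | succ n ih =>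
    have hyn := ih.mono (Filtration.mono _ n.le_succ) le_rfl
    have hξn := (Filtration.stronglyAdapted_natural hξ (n + 1)).measurable
    rw [funext (hy n)]
    exact hyn.sub (((measurable_sgn.comp hyn).add (hξn.const_mul σ)).const_mul α)

lemma measure_abs_succ_le_of_sign_dynamics {P : Measure Ω} [IsProbabilityMeasure P]
    (hα : 0 < α) (hσ : 0 < σ) (hξ : ∀ n, Measurable (ξ n)) {m : ℝ} {v : ℝ≥0} (hv : v ≠ 0)
    (hlaw : ∀ n, P.map (ξ n) = gaussianReal m v) (hindep : iIndepFun ξ P)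
    (hy0 : ∀ ω, y 0 ω = w0)
    (hy : ∀ n ω, y (n + 1) ω = y n ω - α * (sgn (y n ω) + σ * ξ (n + 1) ω)) (ε : ℝ) (n : ℕ) :
    P {ω | |y (n + 1) ω| ≤ ε} ≤ ENNReal.ofReal ((√(2 * π * v))⁻¹ * (2 * ε / (α * σ))) := by
  have hξ' := fun k ↦ (hξ k).stronglyMeasurable
  have hpast := measurable_natural_of_sign_dynamics hξ' hy0 hy n
  have hdrift := hpast.sub ((measurable_sgn.comp hpast).const_mul α)
  have hindep_step : IndepFun (fun ω ↦ y n ω - α * sgn (y n ω)) (ξ (n + 1)) P := by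
    rw [IndepFun_iff_Indep]
    exact (indep_of_indep_of_le_right (hindep.indep_comap_natural_of_lt hξ' n.lt_succ_self)
      hdrift.comap_le).symm
  have hstep (ω : Ω) : y (n + 1) ω = (y n ω - α * sgn (y n ω)) - α * σ * ξ (n + 1) ω := by
    rw [hy]; ring
  simp only [hstep]
  exact measure_abs_sub_mul_le_of_indepFun (hdrift.mono (Filtration.le _ n) le_rfl) (hξ _) hv
    (hlaw _) hindep_step (mul_pos hα hσ) ε

lemma tendsto_measure_forall_lt_abs_nhdsGT_zero {P : Measure Ω} [IsProbabilityMeasure P]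
    {ε Δ : ℝ} (hα : 0 < α) (hε : 0 ≤ ε) (hΔ : 0 < Δ) {u : ℕ → ℝ}
    (hu : ∀ n, u (n + 1) = u n - α * sgn (u n)) (hmargin : ∀ n, ε + Δ ≤ |u n|)
    {w : ℝ → ℕ → Ω → ℝ} (hw0 : ∀ σ ω, w σ 0 ω = u 0)
    (hw : ∀ σ n ω, w σ (n + 1) ω = w σ n ω - α * (sgn (w σ n ω) + σ * ξ (n + 1) ω)) (N : ℕ) :
    Tendsto (fun σ ↦ P {ω | ∀ n ≤ N, ε < |w σ n ω|}) (𝓝[>] 0) (𝓝 1) := by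
  set S : Ω → ℝ := fun ω ↦ ∑ k ∈ range N, |ξ (k + 1) ω|
  have hthreshold : Tendsto (fun σ : ℝ ↦ Δ / α * σ⁻¹) (𝓝[>] 0) atTop :=
    tendsto_inv_nhdsGT_zero.const_mul_atTop (div_pos hΔ hα)
  have hlower := ((tendsto_measure_setOf_lt_atTop P S).comp hthreshold)
  rw [measure_univ] at hlower
  refine tendsto_of_tendsto_of_tendsto_of_le_of_le' hlower tendsto_const_nhds ?_
    (Eventually.of_forall fun _ ↦ prob_le_one)
  filter_upwards [self_mem_nhdsWithin] with σ (hσ : 0 < σ)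
  refine measure_mono fun ω (hω : S ω < Δ / α * σ⁻¹) ↦
    lt_abs_of_sum_lt hε hu (hw σ · ω) (hw0 σ ω) hmargin ?_
  calc ∑ k ∈ range N, |α * (σ * ξ (k + 1) ω)| = α * σ * S ω := by
        simp only [S, mul_sum, abs_mul, abs_of_pos hα, abs_of_pos hσ, mul_assoc]
    _ < Δ := by
        rw [lt_mul_inv_iff₀ hσ, lt_div_iff₀ hα] at hω
        linarith

lemma tendsto_measure_forall_lt_abs_atTop {P : Measure Ω} [IsProbabilityMeasure P]
    (hα : 0 < α) (hξ : ∀ n, Measurable (ξ n)) {m : ℝ} {v : ℝ≥0} (hv : v ≠ 0)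
    (hlaw : ∀ n, P.map (ξ n) = gaussianReal m v) (hindep : iIndepFun ξ P)
    {w : ℝ → ℕ → Ω → ℝ} (hw0 : ∀ σ ω, w σ 0 ω = w0)
    (hw : ∀ σ n ω, w σ (n + 1) ω = w σ n ω - α * (sgn (w σ n ω) + σ * ξ (n + 1) ω))
    {ε : ℝ} (hstart : ε < |w0|) (N : ℕ) :
    Tendsto (fun σ ↦ P {ω | ∀ n ≤ N, ε < |w σ n ω|}) atTop (𝓝 1) := by
  set b : ℝ → ℝ≥0∞ := fun σ ↦
    ∑ _n ∈ range N, ENNReal.ofReal ((√(2 * π * v))⁻¹ * (2 * ε / (α * σ)))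
  have hb : Tendsto b atTop (𝓝 0) := by
    have hterm : Tendsto (fun σ : ℝ ↦ (√(2 * π * v))⁻¹ * (2 * ε / (α * σ))) atTop (𝓝 0) := by
      simpa using tendsto_const_nhds.mul
        (tendsto_const_nhds.div_atTop (tendsto_id.const_mul_atTop hα))
    simpa [b] using tendsto_finsetSum (range N) fun _ _ ↦ ENNReal.tendsto_ofReal hterm
  refine tendsto_measure_of_measure_compl_le hb ?_
  filter_upwards [eventually_gt_atTop 0] with σ hσ
  have hbad : {ω | ∀ n ≤ N, ε < |w σ n ω|}ᶜ ⊆ ⋃ n ∈ range N, {ω | |w σ (n + 1) ω| ≤ ε} := by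
    intro ω hω
    obtain ⟨n, hn, hhit⟩ : ∃ n ≤ N, |w σ n ω| ≤ ε := by simpa using hω
    obtain _ | k := n
    · exact absurd (hw0 σ ω ▸ hhit) hstart.not_ge
    · exact Set.mem_biUnion (mem_range.mpr hn) hhit
  calc P {ω | ∀ n ≤ N, ε < |w σ n ω|}ᶜ
      ≤ ∑ n ∈ range N, P {ω | |w σ (n + 1) ω| ≤ ε} :=
        (measure_mono hbad).trans (measure_biUnion_finset_le _ _)
    _ ≤ b σ := sum_le_sum fun n _ ↦
        measure_abs_succ_le_of_sign_dynamics hα hσ hξ hv hlaw hindep (hw0 σ) (hw σ) ε n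

end NoisySignDynamics

theorem noisy_sign_dynamics_extreme_noise_long_hitting_general
    {Ω : Type*} [MeasurableSpace Ω] (P : Measure Ω) [IsProbabilityMeasure P]
    (α ε Δ : ℝ) (hα : 0 < α) (hε : 0 < ε) (hΔ : 0 < Δ) (w0 : ℝ)
    (ξ : ℕ → Ω → ℝ) (hξmeas : ∀ n, Measurable (ξ n))
    (hξdist : ∀ n, Measure.map (ξ n) P = gaussianReal 0 1)
    (hξindep : iIndepFun ξ P)
    (u : ℕ → ℝ) (hu0 : u 0 = w0)
    (hu : ∀ n, u (n + 1) = u n - α * sgn (u n))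
    (humargin : ∀ n, ε + Δ ≤ |u n|)
    (w : ℝ → ℕ → Ω → ℝ)
    (hw0 : ∀ σ ω, w σ 0 ω = w0)
    (hw : ∀ σ n ω, w σ (n + 1) ω = w σ n ω - α * (sgn (w σ n ω) + σ * ξ (n + 1) ω))
    (N : ℕ) :
    Tendsto (fun σ : ℝ => P {ω | ∀ n ≤ N, ε < |w σ n ω|})
      (nhdsWithin 0 (Set.Ioi 0)) (nhds 1) ∧
    Tendsto (fun σ : ℝ => P {ω | ∀ n ≤ N, ε < |w σ n ω|}) atTop (nhds 1) := by
  subst hu0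
  have hstart : ε < |u 0| := by linarith [humargin 0]
  exact ⟨tendsto_measure_forall_lt_abs_nhdsGT_zero hα hε.le hΔ hu humargin hw0 hw N,
    tendsto_measure_forall_lt_abs_atTop hα hξmeas one_ne_zero hξdist hξindep hw0 hw hstart N⟩

/-- Small- and large-noise regimes have long hitting times: if the deterministic sign
dynamics `u` started at `w0` misses the target interval with margin `Δ`
(`|u n| ≥ ε + Δ` for all `n`), then for the noisy sign dynamics `w σ` started at `w0`
and driven by the same i.i.d. standard Gaussian sequence, for every positive integer
`N`, `P(T_ε > N) → 1` both as `σ → 0⁺` and as `σ → ∞`. -/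
theorem noisy_sign_dynamics_extreme_noise_long_hitting
    {Ω : Type*} [MeasurableSpace Ω] (P : Measure Ω) [IsProbabilityMeasure P]
    (α ε Δ : ℝ) (hα : 0 < α) (hε : 0 < ε) (hΔ : 0 < Δ) (w0 : ℝ)
    (ξ : ℕ → Ω → ℝ) (hξmeas : ∀ n, Measurable (ξ n))
    (hξdist : ∀ n, Measure.map (ξ n) P = gaussianReal 0 1)
    (hξindep : iIndepFun ξ P)
    (u : ℕ → ℝ) (hu0 : u 0 = w0)
    (hu : ∀ n, u (n + 1) = u n - α * sgn (u n))
    (humargin : ∀ n, ε + Δ ≤ |u n|)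
    (w : ℝ → ℕ → Ω → ℝ)
    (hw0 : ∀ σ ω, w σ 0 ω = w0)
    (hw : ∀ σ n ω, w σ (n + 1) ω = w σ n ω - α * (sgn (w σ n ω) + σ * ξ (n + 1) ω))
    (N : ℕ) (hN : 1 ≤ N) :
    Tendsto (fun σ : ℝ => P {ω | ∀ n ≤ N, ε < |w σ n ω|})
      (nhdsWithin 0 (Set.Ioi 0)) (nhds 1) ∧
    Tendsto (fun σ : ℝ => P {ω | ∀ n ≤ N, ε < |w σ n ω|}) atTop (nhds 1) :=
  noisy_sign_dynamics_extreme_noise_long_hitting_general P α ε Δ hα hε hΔ w0 ξ hξmeas hξdist hξindep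
    u hu0 hu humargin w hw0 hw N
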